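/- arXiv:1105.1610 — 3 statements merged into one kernel-verified Lean document; each statement's English description precedes it below -/
import Mathlib

section
/- For every prime p and all integers 1 ≤ k ≤ n, one has the product formula α_n(k) = β_k(k)^{p^{n−k}} · (β_{k+1}(k)·β_{k+1}(k+1))^{p^{n−k−1}} · (β_{k+2}(k)·β_{k+2}(k+1)·β_{k+2}(k+2))^{p^{n−k−2}} · ⋯ · (β_n(k)·β_n(k+1)⋯β_n(n)); that is, α_n(k) = Π_{m=k}^{n} ( Π_{ν=k}^{m} β_m(ν) )^{p^{n−m}}. -/
/-- `hcc p n k` is the number of conjugacy classes of a Sylow `p`-subgroup of the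
symmetric group on `p ^ n` letters that consist of elements of order at most `p ^ k`
(with `hcc p n k = 0` for `k < 0`). All Sylow `p`-subgroups are conjugate, so this
count does not depend on the choice of Sylow subgroup. -/
noncomputable def hcc (p n : ℕ) (k : ℤ) : ℕ :=
  if hp : p.Prime ∧ 0 ≤ k then
    haveI : Fact p.Prime := ⟨hp.1⟩
    Nat.card {c : ConjClasses
        (↥((Classical.arbitrary (Sylow p (Equiv.Perm (Fin (p ^ n))))) :
          Subgroup (Equiv.Perm (Fin (p ^ n))))) //
      ∃ g, ConjClasses.mk g = c ∧ orderOf g ≤ p ^ k.toNat}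
  else 0


/-- `beta p n k = (h_n(k-1)/h_n(k)) * (h_{n-1}(k)/h_{n-1}(k-1))^p`, as a real number. -/
noncomputable def beta (p n : ℕ) (k : ℤ) : ℝ :=
  ((hcc p n (k - 1) : ℝ) / hcc p n k) *
    ((hcc p (n - 1) k : ℝ) / hcc p (n - 1) (k - 1)) ^ p

/-! The proof is a double telescoping. Put `G_m(i) = h_m(i) / h_{m-1}(i)^p`; then
`β_m(ν) = G_m(ν-1) / G_m(ν)`, so the inner product is `G_m(k-1) / G_m(m)`, which equals
`α_m(k) / α_{m-1}(k)^p` because `h_{m-1}(m) = h_{m-1}(m-1)`: in `P_{m-1}` every element has order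
at most `p^{m-1}`. Raising these quotients to the powers `p^{n-m}` makes the outer product
telescope to `α_n(k) / α_{k-1}(k)^{p^{n-k+1}} = α_n(k)`. -/

open Finset

theorem Finset.prod_Icc_div_sub_one {G : Type*} [CommGroupWithZero G] {f : ℕ → G}
    (hf : ∀ i, f i ≠ 0) {k j : ℕ} (hkj : k ≤ j) :
    ∏ ν ∈ Icc k j, f (ν - 1) / f ν = f (k - 1) / f j := by
  induction j, hkj using Nat.le_induction with
  | base => simp
  | succ j hkj ih =>
    rw [prod_Icc_succ_top (by omega), ih, Nat.add_sub_cancel, div_mul_div_cancel₀ (hf j)]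

theorem Finset.prod_Icc_div_pow_pow_sub {G : Type*} [CommGroupWithZero G] {f : ℕ → G}
    (hf : ∀ i, f i ≠ 0) (q : ℕ) {k n : ℕ} (hkn : k ≤ n) :
    ∏ m ∈ Icc k n, (f m / f (m - 1) ^ q) ^ q ^ (n - m) = f n / f (k - 1) ^ q ^ (n + 1 - k) := by
  induction n, hkn using Nat.le_induction with
  | base => simp
  | succ n hkn ih =>
    have hpow : ∀ m ∈ Icc k n, (f m / f (m - 1) ^ q) ^ q ^ (n + 1 - m) =
        ((f m / f (m - 1) ^ q) ^ q ^ (n - m)) ^ q := fun m hm => by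
      rw [← pow_mul, ← pow_succ, Nat.sub_add_comm (mem_Icc.mp hm).2]
    rw [prod_Icc_succ_top (by omega), prod_congr rfl hpow, prod_pow, ih, Nat.sub_self, pow_zero,
      pow_one, Nat.add_sub_cancel, div_pow, div_mul_div_cancel₀' (pow_ne_zero q (hf n)), ← pow_mul,
      ← pow_succ, Nat.sub_add_comm (by omega : k ≤ n + 1)]

theorem Equiv.Perm.orderOf_dvd_of_card_eq_prime_pow {α : Type*} [Fintype α] [DecidableEq α]
    {p n : ℕ} (hp : p.Prime) (hα : Fintype.card α = p ^ n) {σ : Equiv.Perm α}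
    (hσ : ∃ a, orderOf σ = p ^ a) : orderOf σ ∣ p ^ n := by
  obtain ⟨a, ha⟩ := hσ
  rw [← σ.lcm_cycleType, Multiset.lcm_dvd]
  intro l hl
  obtain ⟨b, -, rfl⟩ := (Nat.dvd_prime_pow hp).mp (ha ▸ σ.dvd_of_mem_cycleType hl)
  have hb : p ^ b ≤ p ^ n :=
    (σ.le_card_support_of_mem_cycleType hl).trans (hα ▸ σ.support.card_le_univ)
  exact pow_dvd_pow _ ((Nat.pow_le_pow_iff_right hp.one_lt).mp hb)

theorem IsPGroup.orderOf_le_of_card_eq_prime_pow {α : Type*} [Fintype α] [DecidableEq α]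
    {p n : ℕ} [Fact p.Prime] (hα : Fintype.card α = p ^ n) {P : Subgroup (Equiv.Perm α)}
    (hP : IsPGroup p P) (g : P) : orderOf g ≤ p ^ n := by
  have hp : p.Prime := Fact.out
  rw [← Subgroup.orderOf_coe]
  refine Nat.le_of_dvd (pow_pos hp.pos n) (Equiv.Perm.orderOf_dvd_of_card_eq_prime_pow hp hα ?_)
  simpa only [Subgroup.orderOf_coe] using IsPGroup.iff_orderOf.mp hP g

theorem hcc_pos {p : ℕ} (hp : p.Prime) (n : ℕ) {k : ℤ} (hk : 0 ≤ k) : 0 < hcc p n k := by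
  have : Fact p.Prime := ⟨hp⟩
  rw [hcc, dif_pos ⟨hp, hk⟩, Nat.card_pos_iff]
  refine ⟨⟨⟨ConjClasses.mk 1, 1, rfl, ?_⟩⟩, Subtype.finite⟩
  simpa using Nat.one_le_pow _ _ hp.pos

theorem hcc_natCast_ne_zero {p : ℕ} (hp : p.Prime) (n i : ℕ) : (hcc p n i : ℝ) ≠ 0 :=
  Nat.cast_ne_zero.mpr (hcc_pos hp n (Int.natCast_nonneg i)).ne'

theorem hcc_of_le {p : ℕ} (hp : p.Prime) (n : ℕ) {k : ℤ} (hnk : (n : ℤ) ≤ k) :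
    hcc p n k = hcc p n n := by
  have : Fact p.Prime := ⟨hp⟩
  rw [hcc, dif_pos ⟨hp, (Int.natCast_nonneg n).trans hnk⟩, hcc,
    dif_pos ⟨hp, Int.natCast_nonneg n⟩]
  refine Nat.card_congr (Equiv.subtypeEquivRight fun c => ?_)
  have hle := IsPGroup.orderOf_le_of_card_eq_prime_pow (Fintype.card_fin _)
    (Classical.arbitrary (Sylow p (Equiv.Perm (Fin (p ^ n))))).isPGroup'
  constructor
  · rintro ⟨g, rfl, -⟩
    exact ⟨g, rfl, by simpa using hle g⟩
  · rintro ⟨g, rfl, -⟩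
    exact ⟨g, rfl, (hle g).trans (Nat.pow_le_pow_right hp.pos (by omega))⟩

noncomputable def alpha (p n k : ℕ) : ℝ :=
  (hcc p n ((k : ℤ) - 1) : ℝ) / hcc p n n

theorem alpha_ne_zero {p : ℕ} (hp : p.Prime) (n : ℕ) {k : ℕ} (hk : 1 ≤ k) : alpha p n k ≠ 0 := by
  rw [alpha, ← Nat.cast_pred hk]
  exact div_ne_zero (hcc_natCast_ne_zero hp n _) (hcc_natCast_ne_zero hp n n)

theorem alpha_of_lt {p : ℕ} (hp : p.Prime) {n k : ℕ} (hnk : n < k) : alpha p n k = 1 := by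
  rw [alpha, hcc_of_le hp n (by omega)]
  exact div_self (hcc_natCast_ne_zero hp n n)

theorem beta_eq_div_sub_one (p m : ℕ) {ν : ℕ} (hν : 1 ≤ ν) :
    beta p m ν = (hcc p m (ν - 1 : ℕ) / (hcc p (m - 1) (ν - 1 : ℕ) : ℝ) ^ p) /
      (hcc p m ν / (hcc p (m - 1) ν : ℝ) ^ p) := by
  rw [beta, Nat.cast_pred hν, div_pow, div_div_div_eq, div_mul_div_comm,
    mul_comm (hcc p m ν : ℝ)]

theorem prod_Icc_beta {p : ℕ} (hp : p.Prime) {k m : ℕ} (hk : 1 ≤ k) (hkm : k ≤ m) :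
    ∏ ν ∈ Icc k m, beta p m ν = alpha p m k / alpha p (m - 1) k ^ p := by
  have hG : ∀ i : ℕ, (hcc p m i / (hcc p (m - 1) i : ℝ) ^ p) ≠ 0 := fun i =>
    div_ne_zero (hcc_natCast_ne_zero hp m i) (pow_ne_zero p (hcc_natCast_ne_zero hp (m - 1) i))
  rw [prod_congr rfl fun ν hν => beta_eq_div_sub_one p m (hk.trans (mem_Icc.mp hν).1),
    prod_Icc_div_sub_one hG hkm, alpha, alpha, ← Nat.cast_pred hk,
    hcc_of_le hp (m - 1) (by omega : ((m - 1 : ℕ) : ℤ) ≤ m), div_pow, div_div_div_eq,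
    div_div_div_eq, mul_comm (hcc p m m : ℝ)]

theorem alpha_eq_prod_beta_general (p : ℕ) (hp : p.Prime) (k n : ℕ) (hk : 1 ≤ k) :
    (hcc p n ((k : ℤ) - 1) : ℝ) / hcc p n n =
      ∏ m ∈ Finset.Icc k n,
        (∏ ν ∈ Finset.Icc k m, beta p m (ν : ℤ)) ^ (p ^ (n - m)) := by
  show alpha p n k = _
  rcases lt_or_ge n k with hnk | hkn
  · rw [alpha_of_lt hp hnk, Icc_eq_empty (by omega), prod_empty]
  calc alpha p n k = alpha p n k / alpha p (k - 1) k ^ p ^ (n + 1 - k) := by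
        rw [alpha_of_lt hp (n := k - 1) (by omega), one_pow, div_one]
    _ = ∏ m ∈ Icc k n, (alpha p m k / alpha p (m - 1) k ^ p) ^ p ^ (n - m) :=
        (prod_Icc_div_pow_pow_sub (fun i => alpha_ne_zero hp i hk) p hkn).symm
    _ = _ := prod_congr rfl fun m hm => by rw [prod_Icc_beta hp hk (mem_Icc.mp hm).1]

/-- Product formula: `α_n(k) = ∏_{m=k}^{n} (∏_{ν=k}^{m} β_m(ν))^{p^{n−m}}`,
where `α_n(k) = h_n(k−1)/h_n(n)`. -/
theorem alpha_eq_prod_beta (p : ℕ) (hp : p.Prime) (k n : ℕ) (hk : 1 ≤ k) (hkn : k ≤ n) :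
    (hcc p n ((k : ℤ) - 1) : ℝ) / hcc p n n =
      ∏ m ∈ Finset.Icc k n,
        (∏ ν ∈ Finset.Icc k m, beta p m (ν : ℤ)) ^ (p ^ (n - m)) :=
  alpha_eq_prod_beta_general p hp k n hk
end

section
/- Let p = 2. There exists a constant C > 0 such that for all n ≥ 2, one has h_n(n) − h_n(n−2) ≤ C · h_{n−1}(n−1); consequently h_n(n−2)/h_n(n) → 1 as n → ∞. -/
/-!
A Sylow 2-subgroup of the symmetric group on `2 ^ n` letters is the iterated wreath product
`W n = W (n - 1) ≀ C₂` (`Sylow.mulEquivIteratedWreathProduct`). An element `⟨f, σ⟩` outside the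
base group is conjugate to a normal form depending only on the class of `f 1 * f σ`, and has twice
its order; a base element `⟨f, 1⟩` is determined up to conjugacy by the unordered pair of classes
of `f 1` and `f σ`. All elements of the maximal order `2 ^ (n - 1)` of `W (n - 1)` are conjugate,
so a class of `W n` of order `> 2 ^ (n - 2)` is determined by a bit and one class of `W (n - 1)`:
`h_n(n) - h_n(n-2) ≤ 2 k` with `k = h_{n-1}(n-1)`. Unordered pairs of classes give
`2 h_n(n) ≥ k (k + 1)`, and `k ≥ n` because the powers of an element of order `2 ^ (n - 1)` have
`n` distinct orders; hence `h_n(n) - h_n(n-2) ≤ 4 h_n(n) / n`.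
-/

theorem IsConj.orderOf_eq {G : Type*} [Group G] {a b : G} (h : IsConj a b) :
    orderOf a = orderOf b := by
  obtain ⟨c, hc⟩ := h
  exact hc.orderOf_eq

namespace ConjClasses

variable {G H : Type*} [Group G] [Group H]

noncomputable def orderOf : ConjClasses G → ℕ :=
  Quotient.lift _root_.orderOf fun _ _ => IsConj.orderOf_eq

@[simp] lemma orderOf_mk (g : G) : (ConjClasses.mk g).orderOf = _root_.orderOf g := rfl

lemma exists_mk_eq_and_orderOf_le_iff (c : ConjClasses G) (N : ℕ) :
    (∃ g, ConjClasses.mk g = c ∧ _root_.orderOf g ≤ N) ↔ c.orderOf ≤ N := by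
  obtain ⟨g, rfl⟩ := mk_surjective c
  refine ⟨fun ⟨g', hg', hle⟩ => ?_, fun hle => ⟨g, rfl, hle⟩⟩
  rwa [← orderOf_mk, hg'] at hle

def congr (e : G ≃* H) : ConjClasses G ≃ ConjClasses H where
  toFun := map e.toMonoidHom
  invFun := map e.symm.toMonoidHom
  left_inv := forall_isConj.2 fun g => congrArg ConjClasses.mk (e.symm_apply_apply g)
  right_inv := forall_isConj.2 fun h => congrArg ConjClasses.mk (e.apply_symm_apply h)

lemma orderOf_congr (e : G ≃* H) (c : ConjClasses G) : (congr e c).orderOf = c.orderOf := by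
  obtain ⟨g, rfl⟩ := mk_surjective c
  exact e.orderOf_eq g

lemma ncard_range_mk_le [Finite G] (F : G → H) (hF : ∀ a b, IsConj a b → IsConj (F a) (F b)) :
    (Set.range fun a => ConjClasses.mk (F a)).ncard ≤ Nat.card (ConjClasses G) := by
  let F' : ConjClasses G → ConjClasses H :=
    Quotient.lift (fun a => ConjClasses.mk (F a)) fun a b h => mk_eq_mk_iff_isConj.2 (hF a b h)
  rw [← Nat.card_coe_set_eq, show (fun a => ConjClasses.mk (F a)) = F' ∘ ConjClasses.mk from rfl,
    mk_surjective.range_comp]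
  exact Finite.card_range_le F'

lemma card_divisors_orderOf_le [Finite G] (g : G) :
    (_root_.orderOf g).divisors.card ≤ Nat.card (ConjClasses G) := by
  rw [← Nat.card_eq_finsetCard]
  refine Nat.card_le_card_of_injective
    (fun d => ConjClasses.mk (g ^ (_root_.orderOf g / d))) fun d e hde => Subtype.ext ?_
  have hg := (isOfFinOrder_of_finite g).orderOf_pos.ne'
  have := congrArg ConjClasses.orderOf hde
  simp only [orderOf_mk] at this
  rwa [orderOf_pow_orderOf_div hg (Nat.dvd_of_mem_divisors d.2),
    orderOf_pow_orderOf_div hg (Nat.dvd_of_mem_divisors e.2)] at this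

end ConjClasses

local notation "C₂" => Multiplicative (ZMod 2)
local notation "σ" => Multiplicative.ofAdd (1 : ZMod 2)

def pairFun {α : Type*} (a b : α) : C₂ → α := fun x => if x = 1 then a else b

@[simp] lemma pairFun_one {α : Type*} (a b : α) : pairFun a b 1 = a := if_pos rfl

@[simp] lemma pairFun_gen {α : Type*} (a b : α) : pairFun a b σ = b := if_neg (by decide)

namespace RegularWreathProduct

variable {D Q : Type*} [Group D] [Group Q]

def ofLeft : (Q → D) →* D ≀ᵣ Q where
  toFun f := ⟨f, 1⟩
  map_one' := rfl
  map_mul' f g := by ext <;> simp [mul_def]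

@[simp] lemma ofLeft_left (f : Q → D) : (ofLeft f).left = f := rfl
@[simp] lemma ofLeft_right (f : Q → D) : (ofLeft f).right = 1 := rfl

lemma ofLeft_injective : Function.Injective (ofLeft : (Q → D) → D ≀ᵣ Q) :=
  fun _ _ h => congrArg left h

lemma orderOf_ofLeft (f : Q → D) : orderOf (ofLeft f) = orderOf f :=
  orderOf_injective ofLeft ofLeft_injective f

lemma isConj_ofLeft {f g : Q → D} (h : ∀ x, IsConj (f x) (g x)) :
    IsConj (ofLeft f) (ofLeft g) := by
  choose c hc using fun x => isConj_iff.1 (h x)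
  exact ofLeft.map_isConj (isConj_iff.2 ⟨c, funext hc⟩)

lemma isConj_ofLeft_translate (f : Q → D) (q : Q) :
    IsConj (ofLeft f) (ofLeft fun x => f (q⁻¹ * x)) :=
  isConj_iff.2 ⟨inl q, by ext <;> simp [mul_def]⟩

lemma exists_isConj_of_isConj_ofLeft {f g : Q → D} (h : IsConj (ofLeft f) (ofLeft g)) :
    ∃ q : Q, ∀ x, IsConj (f (q⁻¹ * x)) (g x) := by
  obtain ⟨w, hw⟩ := h
  refine ⟨(w : D ≀ᵣ Q).right, fun x => ⟨toUnits ((w : D ≀ᵣ Q).left x), ?_⟩⟩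
  simpa [mul_def, SemiconjBy] using congrFun (congrArg left hw) x

lemma pow_card_mul_eq_one [Finite Q] {e : ℕ} (he : ∀ d : D, d ^ e = 1) (w : D ≀ᵣ Q) :
    w ^ (Nat.card Q * e) = 1 := by
  have hbase : w ^ Nat.card Q = ofLeft (w ^ Nat.card Q).left := by
    ext x
    · rfl
    · exact (map_pow rightHom w _).trans (pow_card_eq_one')
  rw [pow_mul, hbase, ← map_pow, ← map_one ofLeft]
  exact congrArg ofLeft (funext fun x => he _)

section C2

lemma _root_.Multiplicative.zmodTwo_eq_one_or (x : C₂) : x = 1 ∨ x = σ := by decide +revert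

@[simp] lemma _root_.Multiplicative.zmodTwo_inv_gen : (σ : C₂)⁻¹ = σ := by decide

@[simp] lemma _root_.Multiplicative.zmodTwo_gen_mul_gen : (σ : C₂) * σ = 1 := by decide

def twist (c : D) : D ≀ᵣ C₂ := ⟨Pi.mulSingle 1 c, σ⟩

lemma twist_sq (c : D) : twist c ^ 2 = ofLeft fun _ => c := by
  ext x
  · rcases x.zmodTwo_eq_one_or with rfl | rfl <;> simp [twist, sq, mul_def]
  · simp [twist, sq, mul_def]

lemma orderOf_twist (c : D) : orderOf (twist c) = 2 * orderOf c := by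
  have heven : 2 ∣ orderOf (twist c) := by
    simpa [twist] using orderOf_map_dvd rightHom (twist c)
  have hsq := orderOf_pow_of_dvd two_ne_zero heven
  have hconst : orderOf (fun _ : C₂ => c) = orderOf c :=
    orderOf_injective (Pi.constMonoidHom C₂ D) Function.const_injective c
  rw [twist_sq, orderOf_ofLeft, hconst] at hsq
  omega

lemma isConj_twist (f : C₂ → D) : IsConj (⟨f, σ⟩ : D ≀ᵣ C₂) (twist (f 1 * f σ)) := by
  refine isConj_iff.2 ⟨ofLeft (Pi.mulSingle σ (f σ)⁻¹), ?_⟩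
  ext x
  · rcases x.zmodTwo_eq_one_or with rfl | rfl <;> simp [twist, mul_def, Pi.mulSingle_apply]
  · simp [twist, mul_def]

lemma _root_.IsConj.twist {a b : D} (h : IsConj a b) : IsConj (twist a) (twist b) := by
  obtain ⟨u, rfl⟩ := isConj_iff.1 h
  refine isConj_iff.2 ⟨ofLeft fun _ => u, ?_⟩
  ext x
  · rcases x.zmodTwo_eq_one_or with rfl | rfl <;> simp [RegularWreathProduct.twist, mul_def]
  · simp [RegularWreathProduct.twist, mul_def]

lemma orderOf_mk_gen (f : C₂ → D) : orderOf (⟨f, σ⟩ : D ≀ᵣ C₂) = 2 * orderOf (f 1 * f σ) :=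
  (isConj_twist f).orderOf_eq.trans (orderOf_twist _)

lemma isConj_ofLeft_pairFun {f : C₂ → D} {a b : D} (ha : IsConj (f 1) a) (hb : IsConj (f σ) b) :
    IsConj (ofLeft f) (ofLeft (pairFun a b)) :=
  isConj_ofLeft fun x => by
    rcases x.zmodTwo_eq_one_or with rfl | rfl <;> simpa only [pairFun_one, pairFun_gen]

lemma card_sym2_conjClasses_le [Finite D] :
    Nat.card (Sym2 (ConjClasses D)) ≤ Nat.card (ConjClasses (D ≀ᵣ C₂)) := by
  let baseClass : ConjClasses D → ConjClasses D → ConjClasses (D ≀ᵣ C₂) :=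
    Quotient.lift₂ (fun a b => ConjClasses.mk (ofLeft (pairFun a b))) fun _ _ _ _ ha hb =>
      ConjClasses.mk_eq_mk_iff_isConj.2 (isConj_ofLeft_pairFun ha hb)
  have hcomm : ∀ c d, baseClass c d = baseClass d c := by
    refine ConjClasses.forall_isConj.2 fun a => ConjClasses.forall_isConj.2 fun b => ?_
    exact ConjClasses.mk_eq_mk_iff_isConj.2 ((isConj_ofLeft_translate _ σ).trans
      (isConj_ofLeft_pairFun (.refl _) (.refl _)))
  refine Nat.card_le_card_of_injective (Sym2.lift ⟨baseClass, hcomm⟩)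
    (Sym2.ind fun c d => Sym2.ind fun c' d' hss' => ?_)
  obtain ⟨a, rfl⟩ := ConjClasses.mk_surjective c
  obtain ⟨b, rfl⟩ := ConjClasses.mk_surjective d
  obtain ⟨a', rfl⟩ := ConjClasses.mk_surjective c'
  obtain ⟨b', rfl⟩ := ConjClasses.mk_surjective d'
  obtain ⟨q, hq⟩ := exists_isConj_of_isConj_ofLeft (ConjClasses.mk_eq_mk_iff_isConj.1 hss')
  have h1 := hq 1
  have hσ := hq σ
  simp only [Sym2.eq_iff, ConjClasses.mk_eq_mk_iff_isConj]
  rcases q.zmodTwo_eq_one_or with rfl | rfl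
  · simp only [inv_one, one_mul, pairFun_one, pairFun_gen] at h1 hσ
    exact .inl ⟨h1, hσ⟩
  · simp only [Multiplicative.zmodTwo_inv_gen, mul_one, Multiplicative.zmodTwo_gen_mul_gen,
      pairFun_one, pairFun_gen] at h1 hσ
    exact .inr ⟨hσ, h1⟩

lemma ncard_two_pow_lt_orderOf_le [Finite D] {m : ℕ} (hexp : ∀ x : D, x ^ 2 ^ (m + 1) = 1) (t : D)
    (ht : ∀ x : D, orderOf x = 2 ^ (m + 1) → IsConj x t) :
    {c : ConjClasses (D ≀ᵣ C₂) | 2 ^ m < c.orderOf}.ncard ≤ 2 * Nat.card (ConjClasses D) := by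
  have hsub : {c : ConjClasses (D ≀ᵣ C₂) | 2 ^ m < c.orderOf} ⊆
      (Set.range fun a => ConjClasses.mk (twist a)) ∪
        Set.range fun a => ConjClasses.mk (ofLeft (pairFun t a)) := by
    refine ConjClasses.forall_isConj.2 fun ⟨f, q⟩ hlarge => ?_
    rcases q.zmodTwo_eq_one_or with rfl | rfl
    · right
      change 2 ^ m < orderOf (ofLeft f) at hlarge
      have hne : f ^ 2 ^ m ≠ 1 := fun h =>
        (orderOf_le_of_pow_eq_one (by positivity) (by rw [← map_pow, h, map_one])).not_gt hlarge
      obtain ⟨x, hx⟩ := Function.ne_iff.1 hne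
      have hmax := ht _ (orderOf_eq_prime_pow hx (hexp (f x)))
      rcases x.zmodTwo_eq_one_or with rfl | rfl
      · exact ⟨f σ, ConjClasses.mk_eq_mk_iff_isConj.2 (isConj_ofLeft_pairFun hmax (.refl _)).symm⟩
      · exact ⟨f 1, ConjClasses.mk_eq_mk_iff_isConj.2 ((isConj_ofLeft_translate f σ).trans
          (isConj_ofLeft_pairFun hmax (.refl _))).symm⟩
    · exact .inl ⟨f 1 * f σ, ConjClasses.mk_eq_mk_iff_isConj.2 (isConj_twist f).symm⟩
  calc _ ≤ _ := Set.ncard_le_ncard hsub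
    _ ≤ _ := Set.ncard_union_le _ _
    _ ≤ Nat.card (ConjClasses D) + Nat.card (ConjClasses D) :=
      add_le_add (ConjClasses.ncard_range_mk_le _ fun _ _ h => h.twist)
        (ConjClasses.ncard_range_mk_le _ fun _ _ h => isConj_ofLeft_pairFun (.refl _) h)
    _ = _ := (two_mul _).symm

lemma card_conjClasses_mul_succ_le [Finite D] :
    Nat.card (ConjClasses D) * (Nat.card (ConjClasses D) + 1) ≤
      2 * Nat.card (ConjClasses (D ≀ᵣ C₂)) := by
  have h := card_sym2_conjClasses_le (D := D)
  have hchoose := Nat.add_one_mul_choose_eq (Nat.card (ConjClasses D)) 1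
  rw [Sym2.natCard] at h
  rw [Nat.choose_one_right] at hchoose
  linarith

lemma isConj_of_orderOf_eq_two_pow_succ {m : ℕ} (hexp : ∀ d : D, d ^ 2 ^ m = 1)
    (hD : ∀ a b : D, orderOf a = 2 ^ m → orderOf b = 2 ^ m → IsConj a b) (x y : D ≀ᵣ C₂)
    (hx : orderOf x = 2 ^ (m + 1)) (hy : orderOf y = 2 ^ (m + 1)) : IsConj x y := by
  have key : ∀ w : D ≀ᵣ C₂, orderOf w = 2 ^ (m + 1) →
      ∃ c, orderOf c = 2 ^ m ∧ IsConj w (twist c) := by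
    rintro ⟨f, q⟩ hw
    rcases q.zmodTwo_eq_one_or with rfl | rfl
    · have hf : f ^ 2 ^ m = 1 := funext fun x => hexp (f x)
      have hdvd : orderOf (ofLeft f) ∣ 2 ^ m :=
        orderOf_dvd_of_pow_eq_one (by rw [← map_pow, hf, map_one])
      rw [show ofLeft f = ⟨f, 1⟩ from rfl, hw, Nat.pow_dvd_pow_iff_le_right one_lt_two] at hdvd
      omega
    · rw [orderOf_mk_gen, pow_succ', Nat.mul_left_cancel_iff two_pos] at hw
      exact ⟨_, hw, isConj_twist f⟩
  obtain ⟨a, ha, hxa⟩ := key x hx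
  obtain ⟨b, hb, hyb⟩ := key y hy
  exact hxa.trans ((hD a b ha hb).twist.trans hyb.symm)

end C2

end RegularWreathProduct

local notation "W" => IteratedWreathProduct C₂

namespace IteratedWreathProduct

open RegularWreathProduct

lemma pow_two_pow_eq_one : ∀ (n : ℕ) (x : W n), x ^ 2 ^ n = 1
  | 0, x => Subsingleton.elim (α := PUnit) _ _
  | n + 1, x => by
    have h := pow_card_mul_eq_one (Q := C₂) (pow_two_pow_eq_one n) x
    rwa [Nat.card_eq_fintype_card, Fintype.card_multiplicative, ZMod.card, ← pow_succ'] at h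

lemma exists_orderOf_eq_two_pow : ∀ n : ℕ, ∃ x : W n, orderOf x = 2 ^ n
  | 0 => ⟨1, orderOf_one⟩
  | n + 1 => by
    obtain ⟨x, hx⟩ := exists_orderOf_eq_two_pow n
    exact ⟨twist x, (orderOf_twist x).trans (by rw [hx, pow_succ'])⟩

lemma isConj_of_orderOf_eq_two_pow : ∀ (n : ℕ) (x y : W n),
    orderOf x = 2 ^ n → orderOf y = 2 ^ n → IsConj x y
  | 0, x, y, _, _ => by rw [Subsingleton.elim (α := PUnit) x y]
  | n + 1, x, y, hx, hy => isConj_of_orderOf_eq_two_pow_succ (pow_two_pow_eq_one n)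
      (isConj_of_orderOf_eq_two_pow n) x y hx hy

lemma succ_le_card_conjClasses (n : ℕ) : n + 1 ≤ Nat.card (ConjClasses (W n)) := by
  obtain ⟨x, hx⟩ := exists_orderOf_eq_two_pow n
  have := ConjClasses.card_divisors_orderOf_le x
  rwa [hx, Nat.divisors_prime_pow Nat.prime_two, Finset.card_map, Finset.card_range] at this

end IteratedWreathProduct

section hcc

open IteratedWreathProduct RegularWreathProduct

lemma hcc_two_eq_ncard (n : ℕ) {k : ℤ} (hk : 0 ≤ k) :
    hcc 2 n k = {c : ConjClasses (W n) | c.orderOf ≤ 2 ^ k.toNat}.ncard := by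
  rw [hcc, dif_pos ⟨Nat.prime_two, hk⟩, ← Nat.card_coe_set_eq]
  let e := Sylow.mulEquivIteratedWreathProduct 2 n (Fin (2 ^ n)) (by simp) C₂ (by simp)
    (Classical.arbitrary _)
  exact Nat.card_congr <| (ConjClasses.congr e).subtypeEquiv fun c => by
    rw [ConjClasses.exists_mk_eq_and_orderOf_le_iff, Set.mem_ofPred_eq, ConjClasses.orderOf_congr]

lemma hcc_two_self (n : ℕ) : hcc 2 n n = Nat.card (ConjClasses (W n)) := by
  rw [hcc_two_eq_ncard n (Int.natCast_nonneg n), Int.toNat_natCast, ← Set.ncard_univ]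
  congr
  refine Set.eq_univ_of_forall (ConjClasses.forall_isConj.2 fun x => ?_)
  exact orderOf_le_of_pow_eq_one (by positivity) (pow_two_pow_eq_one n x)

lemma hcc_two_gap_bounds (n : ℕ) (hn : 2 ≤ n) :
    ∃ B : ℕ, hcc 2 n ((n : ℤ) - 2) + B = hcc 2 n n ∧
      B ≤ 2 * hcc 2 (n - 1) ((n : ℤ) - 1) ∧ B * n ≤ 4 * hcc 2 n n := by
  obtain ⟨m, rfl⟩ := Nat.exists_eq_add_of_le' hn
  rw [show ((m + 2 : ℕ) : ℤ) - 2 = (m : ℤ) by push_cast; ring,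
    show ((m + 2 : ℕ) : ℤ) - 1 = ((m + 1 : ℕ) : ℤ) by push_cast; ring,
    show m + 2 - 1 = m + 1 from rfl,
    hcc_two_eq_ncard _ (Int.natCast_nonneg m), Int.toNat_natCast, hcc_two_self, hcc_two_self]
  obtain ⟨t, ht⟩ := exists_orderOf_eq_two_pow (m + 1)
  have hlarge : {c : ConjClasses (W (m + 2)) | 2 ^ m < c.orderOf}.ncard ≤
      2 * Nat.card (ConjClasses (W (m + 1))) :=
    ncard_two_pow_lt_orderOf_le (pow_two_pow_eq_one _) t fun x hx =>
      isConj_of_orderOf_eq_two_pow _ x t hx ht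
  have hsplit : {c : ConjClasses (W (m + 2)) | c.orderOf ≤ 2 ^ m}.ncard +
      {c : ConjClasses (W (m + 2)) | 2 ^ m < c.orderOf}.ncard =
        Nat.card (ConjClasses (W (m + 2))) := by
    rw [← Set.ncard_add_ncard_compl {c : ConjClasses (W (m + 2)) | c.orderOf ≤ 2 ^ m}]
    simp only [Set.compl_ofPred, not_le]
  have hk := succ_le_card_conjClasses (m + 1)
  have hK : Nat.card (ConjClasses (W (m + 1))) * (Nat.card (ConjClasses (W (m + 1))) + 1) ≤
      2 * Nat.card (ConjClasses (W (m + 2))) := card_conjClasses_mul_succ_le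
  refine ⟨_, hsplit, hlarge, ?_⟩
  calc _ ≤ 2 * Nat.card (ConjClasses (W (m + 1))) * (Nat.card (ConjClasses (W (m + 1))) + 1) :=
        Nat.mul_le_mul hlarge (by omega)
    _ ≤ 4 * Nat.card (ConjClasses (W (m + 2))) := by linarith

end hcc

lemma tendsto_div_of_sub_mul_le {a b : ℕ → ℝ} (C : ℝ) (hab : ∀ᶠ n in Filter.atTop, a n ≤ b n)
    (hb : ∀ᶠ n in Filter.atTop, 0 < b n)
    (hsub : ∀ᶠ n in Filter.atTop, (b n - a n) * n ≤ C * b n) :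
    Filter.Tendsto (fun n => a n / b n) Filter.atTop (nhds 1) := by
  have hlower : Filter.Tendsto (fun n : ℕ => 1 - C / n) Filter.atTop (nhds 1) := by
    simpa using tendsto_const_nhds.sub (tendsto_const_div_atTop_nhds_zero_nat C)
  refine tendsto_of_tendsto_of_tendsto_of_le_of_le' hlower tendsto_const_nhds ?_ ?_
  · filter_upwards [hb, hsub, Filter.eventually_gt_atTop 0] with n hbn hsubn hn
    have hn' : (0 : ℝ) < n := Nat.cast_pos.2 hn
    rw [le_div_iff₀ hbn, sub_mul, one_mul, div_mul_eq_mul_div, sub_le_comm, le_div_iff₀ hn']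
    exact hsubn
  · filter_upwards [hab, hb] with n habn hbn
    exact (div_le_one hbn).2 habn

theorem h_two_below_top_ratio_general :
    (∃ C : ℝ, 0 < C ∧ ∀ n : ℕ, 2 ≤ n →
        (hcc 2 n n : ℝ) - hcc 2 n ((n : ℤ) - 2) ≤ C * hcc 2 (n - 1) ((n : ℤ) - 1)) ∧
      Filter.Tendsto (fun n : ℕ => (hcc 2 n ((n : ℤ) - 2) : ℝ) / hcc 2 n n)
        Filter.atTop (nhds 1) := by
  have hreal : ∀ n, 2 ≤ n → ∃ B : ℝ, (hcc 2 n n : ℝ) - hcc 2 n ((n : ℤ) - 2) = B ∧ 0 ≤ B ∧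
      B ≤ 2 * hcc 2 (n - 1) ((n : ℤ) - 1) ∧ B * n ≤ 4 * hcc 2 n n := fun n hn => by
    obtain ⟨B, hsum, hB, hBn⟩ := hcc_two_gap_bounds n hn
    refine ⟨B, ?_, B.cast_nonneg, by exact_mod_cast hB, by exact_mod_cast hBn⟩
    rw [← hsum, Nat.cast_add, add_sub_cancel_left]
  refine ⟨⟨2, two_pos, fun n hn => ?_⟩, tendsto_div_of_sub_mul_le 4 ?_ ?_ ?_⟩
  · obtain ⟨B, hB, -, hB2, -⟩ := hreal n hn
    exact hB ▸ hB2
  all_goals filter_upwards [Filter.eventually_ge_atTop 2] with n hn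
  all_goals obtain ⟨B, hB, hB0, -, hBn⟩ := hreal n hn
  · linarith
  · rw [hcc_two_self]
    exact_mod_cast Nat.zero_lt_of_lt (IteratedWreathProduct.succ_le_card_conjClasses n)
  · exact hB ▸ hBn

/-- For `p = 2`: `h_n(n) − h_n(n−2) ≪ h_{n−1}(n−1)`, and hence
`h_n(n−2)/h_n(n) → 1` as `n → ∞`. -/
theorem h_two_below_top_ratio (_ : (2 : ℕ).Prime) :
    (∃ C : ℝ, 0 < C ∧ ∀ n : ℕ, 2 ≤ n →
        (hcc 2 n n : ℝ) - hcc 2 n ((n : ℤ) - 2) ≤ C * hcc 2 (n - 1) ((n : ℤ) - 1)) ∧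
      Filter.Tendsto (fun n : ℕ => (hcc 2 n ((n : ℤ) - 2) : ℝ) / hcc 2 n n)
        Filter.atTop (nhds 1) :=
  h_two_below_top_ratio_general
end

section
/- Let p = 2. There exists a constant C > 0 such that for all n ≥ 2, one has |h_n(n) − (1/2)·h_{n−1}(n−1)^2| ≤ C · h_{n−1}(n−1). -/
open Equiv Multiplicative

theorem Equiv.Perm.orderOf_le_card_of_eq_prime_pow {α : Type*} [Fintype α] [DecidableEq α]
    [Nonempty α] {σ : Perm α} {p k : ℕ} (hp : p.Prime) (hσ : orderOf σ = p ^ k) :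
    orderOf σ ≤ Fintype.card α := by
  have hdvd : orderOf σ ∣ p ^ Nat.log p (Fintype.card α) := by
    rw [← σ.lcm_cycleType, Multiset.lcm_dvd]
    intro l hl
    obtain ⟨b, -, rfl⟩ := (Nat.dvd_prime_pow hp).mp (hσ ▸ Perm.dvd_of_mem_cycleType hl)
    have hb : p ^ b ≤ Fintype.card α :=
      (Perm.le_card_support_of_mem_cycleType hl).trans (Finset.card_le_univ _)
    exact pow_dvd_pow p (Nat.le_log_of_pow_le hp.one_lt hb)
  exact (Nat.le_of_dvd (pow_pos hp.pos _) hdvd).trans (Nat.pow_log_le_self p Fintype.card_ne_zero)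

theorem IsPGroup.orderOf_le_card_of_perm {α : Type*} [Fintype α] [DecidableEq α] [Nonempty α]
    {p : ℕ} [Fact p.Prime] {H : Subgroup (Perm α)} (hH : IsPGroup p H) (g : H) :
    orderOf g ≤ Fintype.card α := by
  obtain ⟨k, hk⟩ := IsPGroup.iff_orderOf.mp hH g
  rw [← Subgroup.orderOf_coe] at hk ⊢
  exact Perm.orderOf_le_card_of_eq_prime_pow Fact.out hk

theorem ConjClasses.card_congr {G H : Type*} [Group G] [Group H] (e : G ≃* H) :
    Nat.card (ConjClasses G) = Nat.card (ConjClasses H) :=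
  Nat.card_congr
    { toFun := map e.toMonoidHom
      invFun := map e.symm.toMonoidHom
      left_inv := fun c => by
        obtain ⟨g, rfl⟩ := mk_surjective c
        exact congrArg ConjClasses.mk (e.symm_apply_apply g)
      right_inv := fun c => by
        obtain ⟨g, rfl⟩ := mk_surjective c
        exact congrArg ConjClasses.mk (e.apply_symm_apply g) }

theorem ConjClasses.mk_eq_mk_iff_exists {G : Type*} [Group G] {a b : G} :
    ConjClasses.mk a = ConjClasses.mk b ↔ ∃ c, c * a * c⁻¹ = b :=
  ConjClasses.mk_eq_mk_iff_isConj.trans isConj_iff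

theorem ConjClasses.mk_conj {G : Type*} [Group G] (g a : G) :
    ConjClasses.mk (g * a * g⁻¹) = ConjClasses.mk a :=
  (ConjClasses.mk_eq_mk_iff_exists.mpr ⟨g, rfl⟩).symm

theorem ConjClasses.mk_mul_comm {G : Type*} [Group G] (a b : G) :
    ConjClasses.mk (a * b) = ConjClasses.mk (b * a) := by
  simpa using (ConjClasses.mk_conj a⁻¹ (a * b)).symm

namespace RegularWreathProduct

variable {D Q : Type*} [Group D] [CommGroup Q]

theorem conj_left (u w : D ≀ᵣ Q) (x : Q) :
    (u * w * u⁻¹).left x =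
      u.left x * w.left (u.right⁻¹ * x) * (u.left (w.right⁻¹ * x))⁻¹ := by
  simp only [mul_left, inv_left, mul_right, Pi.mul_apply, Pi.inv_apply]
  congr 3
  rw [mul_inv_rev, mul_comm w.right⁻¹, mul_assoc, mul_inv_cancel_left]

theorem conj_right (u w : D ≀ᵣ Q) : (u * w * u⁻¹).right = w.right := by
  simp only [mul_right, inv_right, mul_inv_cancel_comm]

end RegularWreathProduct

local notation "C₂" => Multiplicative (ZMod 2)

theorem Multiplicative.zmod_two_cases (q : C₂) : q = 1 ∨ q = ofAdd 1 := by
  revert q; decide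

@[simp] theorem Multiplicative.zmod_two_ofAdd_one_inv : (ofAdd 1 : C₂)⁻¹ = ofAdd 1 := rfl

@[simp] theorem Multiplicative.zmod_two_ofAdd_one_mul_self : (ofAdd 1 : C₂) * ofAdd 1 = 1 := rfl

@[simp] theorem Multiplicative.zmod_two_ofAdd_one_ne_one : (ofAdd 1 : C₂) ≠ 1 := by decide

namespace RegularWreathProduct

variable {D : Type*}

def ofPair (a b : D) (q : C₂) : D ≀ᵣ C₂ := ⟨fun x => if x = 1 then a else b, q⟩

@[simp] theorem ofPair_left_one (a b : D) (q : C₂) : (ofPair a b q).left 1 = a := by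
  simp [ofPair]

@[simp] theorem ofPair_left_ofAdd_one (a b : D) (q : C₂) :
    (ofPair a b q).left (ofAdd 1) = b := by
  simp [ofPair]

@[simp] theorem ofPair_right (a b : D) (q : C₂) : (ofPair a b q).right = q := rfl

theorem ext_zmod_two {v w : D ≀ᵣ C₂} (h₁ : v.left 1 = w.left 1)
    (hσ : v.left (ofAdd 1) = w.left (ofAdd 1)) (hr : v.right = w.right) : v = w := by
  refine RegularWreathProduct.ext (funext fun x => ?_) hr
  rcases zmod_two_cases x with rfl | rfl <;> assumption

variable [Group D]

def classLabel (w : D ≀ᵣ C₂) : Sym2 (ConjClasses D) ⊕ ConjClasses D :=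
  if w.right = 1 then .inl s(.mk (w.left 1), .mk (w.left (ofAdd 1)))
  else .inr (.mk (w.left 1 * w.left (ofAdd 1)))

theorem classLabel_conj (u w : D ≀ᵣ C₂) : classLabel (u * w * u⁻¹) = classLabel w := by
  unfold classLabel
  rw [conj_right]
  rcases zmod_two_cases w.right with hs | hs <;>
    simp only [hs, conj_left, if_true, zmod_two_ofAdd_one_ne_one, if_false, inv_one, one_mul,
      zmod_two_ofAdd_one_inv, zmod_two_ofAdd_one_mul_self, mul_one, ConjClasses.mk_conj]
  · rcases zmod_two_cases u.right with hr | hr <;>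
      simp only [hr, inv_one, one_mul, zmod_two_ofAdd_one_inv,
        zmod_two_ofAdd_one_mul_self, Sym2.eq_swap]
  · rw [show ∀ a b c d : D, a * b * c⁻¹ * (c * d * a⁻¹) = a * (b * d) * a⁻¹ by
      intros; group, ConjClasses.mk_conj]
    rcases zmod_two_cases u.right with hr | hr <;>
      simp only [hr, inv_one, one_mul, zmod_two_ofAdd_one_inv, zmod_two_ofAdd_one_mul_self]
    rw [ConjClasses.mk_mul_comm]

theorem isConj_of_classLabel_eq {v w : D ≀ᵣ C₂} (h : classLabel v = classLabel w) :
    IsConj v w := by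
  unfold classLabel at h
  rcases zmod_two_cases v.right with hs | hs <;> rcases zmod_two_cases w.right with hs' | hs' <;>
    simp only [hs, hs', if_true, zmod_two_ofAdd_one_ne_one, if_false, reduceCtorEq,
      Sum.inl.injEq, Sum.inr.injEq] at h
  · rcases Sym2.eq_iff.mp h with ⟨h₁, hσ⟩ | ⟨h₁, hσ⟩
    · obtain ⟨x, hx⟩ := ConjClasses.mk_eq_mk_iff_exists.mp h₁
      obtain ⟨y, hy⟩ := ConjClasses.mk_eq_mk_iff_exists.mp hσ
      refine isConj_iff.mpr ⟨ofPair x y 1, ext_zmod_two ?_ ?_ ?_⟩ <;>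
        simp [conj_left, hs, hs', hx, hy]
    · obtain ⟨x, hx⟩ := ConjClasses.mk_eq_mk_iff_exists.mp h₁
      obtain ⟨y, hy⟩ := ConjClasses.mk_eq_mk_iff_exists.mp hσ
      refine isConj_iff.mpr ⟨ofPair y x (ofAdd 1), ext_zmod_two ?_ ?_ ?_⟩ <;>
        simp [conj_left, hs, hs', hx, hy]
  · obtain ⟨z, hz⟩ := ConjClasses.mk_eq_mk_iff_exists.mp h
    refine isConj_iff.mpr ⟨ofPair z ((w.left 1)⁻¹ * z * v.left 1) 1, ext_zmod_two ?_ ?_ ?_⟩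
    · simp [conj_left, hs]
    · simp only [conj_left, ofPair_left_ofAdd_one, ofPair_right, inv_one, one_mul, hs,
        zmod_two_ofAdd_one_inv, zmod_two_ofAdd_one_mul_self, ofPair_left_one]
      calc (w.left 1)⁻¹ * z * v.left 1 * v.left (ofAdd 1) * z⁻¹
          = (w.left 1)⁻¹ * (z * (v.left 1 * v.left (ofAdd 1)) * z⁻¹) := by group
        _ = w.left (ofAdd 1) := by rw [hz]; group
    · simp [hs, hs']

theorem classLabel_surjective : Function.Surjective (classLabel (D := D)) := by
  rintro (q | c)
  · induction q using Sym2.ind with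
    | _ c d =>
      obtain ⟨a, rfl⟩ := ConjClasses.mk_surjective c
      obtain ⟨b, rfl⟩ := ConjClasses.mk_surjective d
      exact ⟨ofPair a b 1, by simp [classLabel]⟩
  · obtain ⟨a, rfl⟩ := ConjClasses.mk_surjective c
    exact ⟨ofPair a 1 (ofAdd 1), by simp [classLabel]⟩

noncomputable def conjClassesEquiv :
    ConjClasses (D ≀ᵣ C₂) ≃ Sym2 (ConjClasses D) ⊕ ConjClasses D :=
  Equiv.ofBijective
    (Quotient.lift classLabel fun v w h => by
      obtain ⟨u, rfl⟩ := isConj_iff.mp h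
      exact (classLabel_conj u v).symm)
    ⟨fun c c' h => by
      obtain ⟨v, rfl⟩ := ConjClasses.mk_surjective c
      obtain ⟨w, rfl⟩ := ConjClasses.mk_surjective c'
      exact ConjClasses.mk_eq_mk_iff_isConj.mpr (isConj_of_classLabel_eq h),
    .of_comp (g := ConjClasses.mk) classLabel_surjective⟩

theorem card_conjClasses_zmod_two [Finite D] :
    Nat.card (ConjClasses (D ≀ᵣ C₂)) =
      (Nat.card (ConjClasses D) + 1).choose 2 + Nat.card (ConjClasses D) := by
  rw [Nat.card_congr conjClassesEquiv, Nat.card_sum, Sym2.natCard]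

end RegularWreathProduct

theorem hcc_self (p n : ℕ) [Fact p.Prime] :
    hcc p n n = Nat.card (ConjClasses (IteratedWreathProduct (Multiplicative (ZMod p)) n)) := by
  rw [hcc, dif_pos ⟨Fact.out, Int.natCast_nonneg n⟩, Int.toNat_natCast]
  rw [Nat.card_congr (Equiv.subtypeUnivEquiv fun c => ?_)]
  · exact ConjClasses.card_congr (Sylow.mulEquivIteratedWreathProduct p n _ (by simp) _
      (by simp) _)
  · obtain ⟨g, rfl⟩ := ConjClasses.mk_surjective c
    refine ⟨g, rfl, ?_⟩
    simpa using IsPGroup.orderOf_le_card_of_perm (Sylow.isPGroup' _) g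

theorem hcc_succ (m : ℕ) :
    hcc 2 (m + 1) ((m + 1 : ℕ) : ℤ) = (hcc 2 m m + 1).choose 2 + hcc 2 m m := by
  rw [hcc_self, hcc_self]
  -- `IteratedWreathProduct C₂ (m + 1)` unfolds to `IteratedWreathProduct C₂ m ≀ᵣ C₂`.
  exact RegularWreathProduct.card_conjClasses_zmod_two

theorem h_top_square_approx_general :
    ∃ C : ℝ, 0 < C ∧ ∀ n : ℕ, 2 ≤ n →
      |(hcc 2 n n : ℝ) - (1 / 2) * (hcc 2 (n - 1) ((n : ℤ) - 1) : ℝ) ^ 2| ≤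
        C * hcc 2 (n - 1) ((n : ℤ) - 1) := by
  refine ⟨3 / 2, by norm_num, fun n hn => ?_⟩
  obtain ⟨m, rfl⟩ : ∃ m, n = m + 1 := ⟨n - 1, by omega⟩
  rw [hcc_succ, Nat.add_sub_cancel, Nat.cast_succ, add_sub_cancel_right]
  push_cast [Nat.cast_choose_two]
  rw [show ∀ h : ℝ, (h + 1) * (h + 1 - 1) / 2 + h - 1 / 2 * h ^ 2 = 3 / 2 * h by intro; ring,
    abs_of_nonneg (by positivity)]

/-- For `p = 2`: `h_n(n) = (1/2) h_{n−1}(n−1)^2 + O(h_{n−1}(n−1))`. -/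
theorem h_top_square_approx (_ : (2 : ℕ).Prime) :
    ∃ C : ℝ, 0 < C ∧ ∀ n : ℕ, 2 ≤ n →
      |(hcc 2 n n : ℝ) - (1 / 2) * (hcc 2 (n - 1) ((n : ℤ) - 1) : ℝ) ^ 2| ≤
        C * hcc 2 (n - 1) ((n : ℤ) - 1) :=
  h_top_square_approx_general
end
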